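/- Let $R$ be a commutative ring, $m \ge 2$, let $B_1, \dots, B_m$ be $2 \times 2$ matrices over $R$ with $\det B_i = 1$ for all $i$, and let $u_1, \dots, u_m \in R$. Let $C$ be the $2m \times 2m$ block matrix whose $(i,i)$ block is $u_i B_i$, whose $(i,i+1)$ block is $-I_2$ for $1 \le i \le m-1$, whose $(m,1)$ block is $-I_2$, and all of whose other blocks are zero. Then, with $u = u_1 u_2 \cdots u_m$, one has $\det C = u^2 - \operatorname{tr}(B_m B_{m-1} \cdots B_1)\, u + 1$. -/

import Mathlib

/-!
Rotating the block columns of `C` one step turns it into `N - 1`, where `N` is the block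
cyclic shift carrying the blocks `Aᵢ = uᵢ Bᵢ` just below the diagonal. Taking the Schur
complement of the identity block at index `0` of `1 - N` leaves the same kind of matrix with
one block fewer, in which `A₁` and `A₀` are merged into `A₁ A₀`; by induction
`det (1 - N) = det (1 - Aₘ₋₁ ⋯ A₀)`, and the signs cancel to give `det C = det (u P - 1)` with
`P = Bₘ₋₁ ⋯ B₀`. For `2 × 2` matrices `det (X - 1) = det X - tr X + 1`, and `det P = 1`.
-/

open Matrix

theorem Fin.zero_eq_add_one_iff {m : ℕ} {j : Fin (m + 1)} : 0 = j + 1 ↔ j = Fin.last m := by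
  rw [eq_comm]
  induction j using Fin.lastCases <;> simp [Fin.coeSucc_eq_succ, Fin.succ_ne_zero]

theorem Fin.zero_eq_succ_add_one_iff {m : ℕ} {j : Fin (m + 1)} :
    0 = j.succ + 1 ↔ j = Fin.last m := by
  rw [Fin.zero_eq_add_one_iff, ← Fin.succ_last, Fin.succ_inj]

theorem Fin.succ_eq_succ_add_one_iff {m : ℕ} {i j : Fin (m + 1)} :
    i.succ = j.succ + 1 ↔ i = j + 1 ∧ i ≠ 0 := by
  induction j using Fin.lastCases with
  | last => simp [Fin.succ_ne_zero]
  | cast k =>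
    rw [Fin.succ_castSucc, Fin.coeSucc_eq_succ, Fin.coeSucc_eq_succ, Fin.succ_inj]
    exact ⟨fun h => ⟨h, h ▸ Fin.succ_ne_zero k⟩, And.left⟩

def finSuccProdEquiv (n : Type*) (m : ℕ) : Fin (m + 1) × n ≃ n ⊕ Fin m × n :=
  ((finSuccEquiv m).prodCongr (Equiv.refl n)).trans optionProdEquiv

@[simp] lemma finSuccProdEquiv_symm_inl {n : Type*} (m : ℕ) (a : n) :
    (finSuccProdEquiv n m).symm (.inl a) = (0, a) := rfl

@[simp] lemma finSuccProdEquiv_symm_inr {n : Type*} (m : ℕ) (i : Fin m) (a : n) :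
    (finSuccProdEquiv n m).symm (.inr (i, a)) = (i.succ, a) := rfl

theorem List.prod_reverse_ofFn_smul {S M : Type*} [CommMonoid S] [Monoid M] [MulAction S M]
    [IsScalarTower S M M] [SMulCommClass S M M] {m : ℕ} (u : Fin m → S) (B : Fin m → M) :
    (List.ofFn fun i => u i • B i).reverse.prod = (∏ i, u i) • (List.ofFn B).reverse.prod := by
  induction m with
  | zero => simp
  | succ m ih =>
    simp only [List.ofFn_succ, List.reverse_cons, List.prod_append, List.prod_singleton,
      ih (fun i => u i.succ), Fin.prod_univ_succ, smul_mul_smul_comm, mul_comm (u 0)]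

namespace Matrix

section CyclicBlock

variable {R : Type*} [CommRing R] {n : Type*} [DecidableEq n]

def cyclicShift {m : ℕ} [NeZero m] (A : Fin m → Matrix n n R) :
    Matrix (Fin m × n) (Fin m × n) R :=
  of fun p q => if p.1 = q.1 + 1 then A p.1 p.2 q.2 else 0

def cyclicBlock {m : ℕ} [NeZero m] (A : Fin m → Matrix n n R) :
    Matrix (Fin m × n) (Fin m × n) R :=
  of fun p q => if q.1 = p.1 then A p.1 p.2 q.2
    else if q.1 = p.1 + 1 then (-(1 : Matrix n n R)) p.2 q.2 else 0

lemma cyclicBlock_submatrix_finRotate {m : ℕ} (A : Fin (m + 2) → Matrix n n R) :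
    (cyclicBlock A).submatrix id (Equiv.prodCongrLeft fun _ => finRotate (m + 2)) =
      cyclicShift A - 1 := by
  ext ⟨i, a⟩ ⟨j, b⟩
  rcases eq_or_ne (j + 1) i with rfl | h
  · simp [cyclicBlock, cyclicShift, finRotate_apply]
  · rcases eq_or_ne j i with rfl | h'
    · simp [cyclicBlock, cyclicShift, finRotate_apply, one_apply]
    · simp [cyclicBlock, cyclicShift, finRotate_apply, h, h.symm, h', h'.symm]

variable [Fintype n]

lemma one_sub_cyclicShift_submatrix {m : ℕ} (A : Fin (m + 2) → Matrix n n R) :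
    let X : Matrix n (Fin (m + 1) × n) R :=
      -of fun a q => if q.1 = Fin.last m then A 0 a q.2 else 0
    let Y : Matrix (Fin (m + 1) × n) n R := -of fun p b => if p.1 = 0 then A 1 p.2 b else 0
    (1 - cyclicShift A).submatrix (finSuccProdEquiv n (m + 1)).symm
        (finSuccProdEquiv n (m + 1)).symm =
      fromBlocks 1 X Y (1 - cyclicShift (Fin.cons (A 1 * A 0) fun i => A i.succ.succ) + Y * X) := by
  intro X Y
  have hYX : ∀ p q, (Y * X) p q =
      if p.1 = 0 ∧ q.1 = Fin.last m then (A 1 * A 0) p.2 q.2 else 0 := by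
    intro p q
    by_cases hp : p.1 = 0 <;> by_cases hq : q.1 = Fin.last m <;> simp [X, Y, mul_apply, hp, hq]
  ext (a | ⟨i, a⟩) (b | ⟨j, b⟩)
  · simp [cyclicShift, one_apply]
  · simp [cyclicShift, X, Fin.zero_eq_succ_add_one_iff, (Fin.succ_ne_zero j).symm]
  · cases i using Fin.cases <;> simp [cyclicShift, Y, Fin.succ_succ_ne_one]
  · simp only [submatrix_apply, finSuccProdEquiv_symm_inr, fromBlocks_apply₂₂, sub_apply,
      add_apply, hYX, one_apply, Prod.mk.injEq, Fin.succ_inj, cyclicShift, of_apply,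
      Fin.succ_eq_succ_add_one_iff]
    cases i using Fin.cases <;> simp [Fin.zero_eq_add_one_iff, Fin.succ_ne_zero]

theorem det_one_sub_cyclicShift {m : ℕ} (A : Fin (m + 1) → Matrix n n R) :
    det (1 - cyclicShift A) = det (1 - (List.ofFn A).reverse.prod) := by
  induction m with
  | zero =>
    rw [← det_submatrix_equiv_self (Equiv.uniqueProd n (Fin 1)).symm]
    congr 1
    ext a b
    simp [cyclicShift, one_apply]
  | succ m ih =>
    rw [← det_submatrix_equiv_self (finSuccProdEquiv n (m + 1)).symm,
      one_sub_cyclicShift_submatrix, det_fromBlocks_one₁₁, add_sub_cancel_right, ih]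
    simp [List.ofFn_succ]

lemma sign_prodCongrLeft_finRotate (m : ℕ) :
    Equiv.Perm.sign (Equiv.prodCongrLeft fun _ : n => finRotate (m + 1)) =
      (-1) ^ (m * Fintype.card n) := by
  simp [Equiv.Perm.sign_prodCongrLeft, sign_finRotate, pow_mul]

lemma det_one_sub (M : Matrix n n R) : det (1 - M) = (-1) ^ Fintype.card n * det (M - 1) := by
  rw [← neg_sub, det_neg]

theorem det_cyclicBlock {m : ℕ} (A : Fin (m + 2) → Matrix n n R) :
    det (cyclicBlock A) = det ((List.ofFn A).reverse.prod - 1) := by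
  have h := det_permute' (Equiv.prodCongrLeft fun _ : n => finRotate (m + 2)) (cyclicBlock A)
  rw [cyclicBlock_submatrix_finRotate, ← neg_sub, det_neg, det_one_sub_cyclicShift,
    det_one_sub, sign_prodCongrLeft_finRotate, Fintype.card_prod, Fintype.card_fin] at h
  push_cast at h
  set c := Fintype.card n
  calc det (cyclicBlock A)
      = (-1) ^ ((m + 1) * c) * ((-1) ^ ((m + 1) * c) * det (cyclicBlock A)) := by
        rw [← mul_assoc, ← mul_pow, neg_one_mul, neg_neg, one_pow, one_mul]
    _ = (-1) ^ ((m + 1) * c) * ((-1) ^ ((m + 2) * c) *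
          ((-1) ^ c * det ((List.ofFn A).reverse.prod - 1))) := by
        rw [h]
    _ = det ((List.ofFn A).reverse.prod - 1) := by
        rw [← mul_assoc, ← mul_assoc, ← pow_add, ← pow_add,
          Even.neg_one_pow ⟨(m + 2) * c, by ring⟩, one_mul]

end CyclicBlock

lemma det_sub_one_fin_two {R : Type*} [CommRing R] (M : Matrix (Fin 2) (Fin 2) R) :
    det (M - 1) = det M - trace M + 1 := by
  simp [det_fin_two, trace_fin_two]
  ring

end Matrix

/-- For `2 × 2` matrices `Bᵢ` with `det Bᵢ = 1` and scalars `uᵢ`, the cyclic block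
matrix with diagonal blocks `uᵢ Bᵢ`, blocks `-I₂` in positions `(i, i+1)` (cyclically,
so block `(m,1)` is `-I₂`) and zero otherwise has determinant
`u² - tr(Bₘ ⋯ B₁) u + 1` where `u = u₁ ⋯ uₘ`. -/
theorem cyclic_block_det_sl2 {R : Type*} [CommRing R] (m : ℕ) (hm : 2 ≤ m)
    (B : Fin m → Matrix (Fin 2) (Fin 2) R) (hB : ∀ i, (B i).det = 1)
    (u : Fin m → R)
    (C : Matrix (Fin m × Fin 2) (Fin m × Fin 2) R)
    (hC : ∀ i j : Fin m × Fin 2, C i j =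
      if j.1 = i.1 then u i.1 * B i.1 i.2 j.2
      else if (j.1 : ℕ) = ((i.1 : ℕ) + 1) % m then (-(1 : Matrix (Fin 2) (Fin 2) R)) i.2 j.2
      else 0) :
    C.det = (∏ i, u i) ^ 2 - ((List.ofFn B).reverse.prod).trace * (∏ i, u i) + 1 := by
  obtain ⟨k, rfl⟩ : ∃ k, m = k + 2 := ⟨m - 2, by omega⟩
  have hC' : C = cyclicBlock fun i => u i • B i := by
    ext p q
    simp [hC, cyclicBlock, Fin.ext_iff, Fin.val_add]
  have hdet : det (List.ofFn B).reverse.prod = 1 := by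
    rw [← coe_detMonoidHom, map_list_prod, List.map_reverse, List.map_ofFn]
    simp [Function.comp_def, hB]
  rw [hC', det_cyclicBlock, List.prod_reverse_ofFn_smul, det_sub_one_fin_two, det_smul,
    trace_smul, hdet, Fintype.card_fin, smul_eq_mul]
  ring
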